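/- arXiv:2310.12863 — 2 statements merged into one kernel-verified Lean document; each statement's English description precedes it below -/
import Mathlib

section
/- For m > 2, the probability measure μ_{G_m} with cumulative distribution function G_m satisfies ∫ |x|^m dμ_{G_m}(x) = 1 + 2m. -/
/-! By the layer-cake formula with weight `m t^(m-1)`, the `m`-th absolute moment is
`∫_0^∞ (μ(-∞,-t] + μ(t,∞)) m t^(m-1) dt`; since `G_m(-t) = 1 - G_m(t)`, both tails equal
`G_m(-t)`. The integrand is then `m t^(m-1)` on `(0,1]`, `m/t` on `(1,e]` and `m/(t log² t)` on
`(e,∞)`, with antiderivatives `t^m`, `m log t` and `-m/log t`, giving `1 + m + m`. -/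

open Real Filter MeasureTheory

/-- The cdf `G_m` from the paper. -/
noncomputable def G (m : ℝ) (x : ℝ) : ℝ :=
  if x ≤ -1 then (1/2) * |x| ^ (-m) * (max (Real.log |x|) 1) ^ (-2 : ℝ)
  else if x < 1 then 1/2
  else 1 - (1/2) * x ^ (-m) * (max (Real.log x) 1) ^ (-2 : ℝ)

open Set Topology

theorem lintegral_ofReal_abs_rpow_eq_lintegral_tails_mul (μ : Measure ℝ) {p : ℝ} (hp : 0 < p) :
    ∫⁻ x, ENNReal.ofReal (|x| ^ p) ∂μ =
      ∫⁻ t in Ioi 0, (μ (Iic (-t)) + μ (Ioi t)) * ENNReal.ofReal (p * t ^ (p - 1)) := by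
  rw [lintegral_rpow_eq_lintegral_meas_le_mul μ (ae_of_all _ fun x => abs_nonneg x)
    (by fun_prop) hp, ← lintegral_const_mul' _ _ ENNReal.ofReal_ne_top]
  refine setLIntegral_congr_fun_ae measurableSet_Ioi ?_
  -- `μ (Ici t) = μ (Ioi t)` off the countably many atoms of `μ`
  filter_upwards [meas_le_ae_eq_meas_lt μ volume id] with t hIci ht
  have hsplit : {x : ℝ | t ≤ |x|} = Iic (-t) ∪ Ici t := by
    ext x
    simp only [mem_ofPred_eq, mem_union, mem_Iic, mem_Ici, le_abs, le_neg]
    tauto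
  have hdisj : Disjoint (Iic (-t)) (Ici t) :=
    Iic_disjoint_Ici.mpr (by linarith [mem_Ioi.mp ht])
  rw [hsplit, measure_union hdisj measurableSet_Ici, ENNReal.ofReal_mul hp.le]
  change μ (Ici t) = μ (Ioi t) at hIci
  rw [hIci]
  ring

theorem lintegral_Ioc_ofReal_of_hasDerivAt_of_nonneg {f f' : ℝ → ℝ} {a b : ℝ}
    (hab : a ≤ b) (hcont : ContinuousOn f (Icc a b))
    (hderiv : ∀ x ∈ Ioo a b, HasDerivAt f (f' x) x)
    (hf' : ∀ x ∈ Ioo a b, 0 ≤ f' x) :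
    ∫⁻ x in Ioc a b, ENNReal.ofReal (f' x) = ENNReal.ofReal (f b - f a) := by
  have hint : IntegrableOn f' (Ioc a b) :=
    intervalIntegral.integrableOn_deriv_of_nonneg hcont hderiv hf'
  rw [← intervalIntegral.integral_eq_sub_of_hasDerivAt_of_le hab hcont hderiv
    ((intervalIntegrable_iff_integrableOn_Ioc_of_le hab).mpr hint),
    intervalIntegral.integral_of_le hab, ofReal_integral_eq_lintegral_ofReal hint]
  rw [← Measure.restrict_congr_set Ioo_ae_eq_Ioc]
  exact (ae_restrict_iff' measurableSet_Ioo).mpr (ae_of_all _ hf')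

theorem lintegral_Ioi_ofReal_of_hasDerivAt_of_nonneg {f f' : ℝ → ℝ} {a l : ℝ}
    (hcont : ContinuousWithinAt f (Ici a) a) (hderiv : ∀ x ∈ Ioi a, HasDerivAt f (f' x) x)
    (hf' : ∀ x ∈ Ioi a, 0 ≤ f' x) (hf : Tendsto f atTop (𝓝 l)) :
    ∫⁻ x in Ioi a, ENNReal.ofReal (f' x) = ENNReal.ofReal (l - f a) := by
  rw [← integral_Ioi_of_hasDerivAt_of_nonneg hcont hderiv hf' hf,
    ofReal_integral_eq_lintegral_ofReal (integrableOn_Ioi_deriv_of_nonneg hcont hderiv hf' hf)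
      ((ae_restrict_iff' measurableSet_Ioi).mpr (ae_of_all _ hf'))]

theorem G_neg (m x : ℝ) : G m (-x) = 1 - G m x := by
  rcases le_or_gt x (-1) with hx | hx
  · rw [G, G, if_neg (by linarith), if_neg (by linarith), if_pos hx, abs_of_neg (by linarith)]
  rcases lt_or_ge x 1 with hx' | hx'
  · rw [G, G, if_neg (by linarith), if_pos (by linarith), if_neg (by linarith), if_pos hx']
    norm_num
  · rw [G, G, if_pos (by linarith), if_neg (by linarith), if_neg (by linarith), abs_neg,
      abs_of_pos (by linarith)]
    ring

theorem G_neg_of_le_one {m t : ℝ} (ht₀ : 0 ≤ t) (ht₁ : t ≤ 1) : G m (-t) = 1 / 2 := by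
  rcases ht₁.lt_or_eq with ht₁ | rfl
  · rw [G, if_neg (by linarith), if_pos (by linarith)]
  · simp [G]

theorem G_neg_of_one_le {m t : ℝ} (ht : 1 ≤ t) :
    G m (-t) = 1 / 2 * t ^ (-m) * max (log t) 1 ^ (-2 : ℝ) := by
  rw [G, if_pos (by linarith), abs_neg, abs_of_pos (by linarith)]

theorem measure_Iic_neg_add_measure_Ioi {m : ℝ} {μ : Measure ℝ} [IsProbabilityMeasure μ]
    (hcdf : ∀ x : ℝ, (μ (Iic x)).toReal = G m x) (t : ℝ) :
    μ (Iic (-t)) + μ (Ioi t) = ENNReal.ofReal (2 * G m (-t)) := by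
  have hIic : ∀ x, μ (Iic x) = ENNReal.ofReal (G m x) := fun x => by
    rw [← hcdf, ENNReal.ofReal_toReal (measure_ne_top μ _)]
  have hIoi : μ (Ioi t) = ENNReal.ofReal (G m (-t)) := by
    rw [← ENNReal.ofReal_toReal (measure_ne_top μ _), ← measureReal_def, ← compl_Iic,
      probReal_compl_eq_one_sub measurableSet_Iic, measureReal_def, hcdf, G_neg]
  have hG : 0 ≤ G m (-t) := by
    rw [← hcdf]; exact ENNReal.toReal_nonneg
  rw [hIic, hIoi, ← ENNReal.ofReal_add hG hG, two_mul]

theorem lintegral_Ioi_one_inv_mul_max_log_one_rpow_neg_two :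
    ∫⁻ t in Ioi 1, ENNReal.ofReal (t⁻¹ * max (log t) 1 ^ (-2 : ℝ)) = 2 := by
  have he : (1 : ℝ) ≤ exp 1 := one_le_exp zero_le_one
  have hnear :
      ∫⁻ t in Ioc 1 (exp 1), ENNReal.ofReal (t⁻¹ * max (log t) 1 ^ (-2 : ℝ)) = 1 := by
    have hlog : ∀ t ∈ Ioc 1 (exp 1), t⁻¹ * max (log t) 1 ^ (-2 : ℝ) = t⁻¹ :=
      fun t ht => by
      have : log t ≤ 1 := (log_le_iff_le_exp (by linarith [ht.1])).mpr ht.2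
      rw [max_eq_right this, one_rpow, mul_one]
    rw [setLIntegral_congr_fun measurableSet_Ioc fun t ht => congrArg ENNReal.ofReal (hlog t ht),
      lintegral_Ioc_ofReal_of_hasDerivAt_of_nonneg he
        (continuousOn_log.mono fun t ht => (zero_lt_one.trans_le ht.1).ne')
        (fun t ht => hasDerivAt_log (zero_lt_one.trans ht.1).ne')
        (fun t ht => inv_nonneg.mpr (zero_lt_one.trans ht.1).le)]
    simp
  have hfar :
      ∫⁻ t in Ioi (exp 1), ENNReal.ofReal (t⁻¹ * max (log t) 1 ^ (-2 : ℝ)) = 1 := by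
    have hlog : ∀ t ∈ Ioi (exp 1), 1 < log t := fun t ht => (lt_log_iff_exp_lt (by
      linarith [exp_pos 1, mem_Ioi.mp ht])).mpr ht
    have hderiv : ∀ t ∈ Ioi (exp 1),
        HasDerivAt (fun t => -(log t)⁻¹) (t⁻¹ * max (log t) 1 ^ (-2 : ℝ)) t :=
        fun t ht => by
      have ht₀ : t ≠ 0 := by linarith [exp_pos 1, mem_Ioi.mp ht]
      have hl := hlog t ht
      refine ((hasDerivAt_log ht₀).inv (by linarith)).neg.congr_deriv ?_
      rw [max_eq_left hl.le, rpow_neg (by linarith), rpow_two]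
      ring
    rw [lintegral_Ioi_ofReal_of_hasDerivAt_of_nonneg
      ((continuousAt_log (exp_pos 1).ne').inv₀ (by simp)).neg.continuousWithinAt hderiv
      (fun t ht => mul_nonneg (inv_nonneg.mpr (by linarith [exp_pos 1, mem_Ioi.mp ht]))
        (rpow_nonneg (le_max_of_le_right zero_le_one) _))
      tendsto_log_atTop.inv_tendsto_atTop.neg]
    simp
  rw [← Ioc_union_Ioi_eq_Ioi he, lintegral_union measurableSet_Ioi (Ioc_disjoint_Ioi le_rfl),
    hnear, hfar, one_add_one_eq_two]

theorem two_mul_G_neg_mul_of_one_le {m t : ℝ} (ht : 1 ≤ t) :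
    2 * G m (-t) * (m * t ^ (m - 1)) = m * (t⁻¹ * max (log t) 1 ^ (-2 : ℝ)) := by
  have hpow : t ^ (-m) * t ^ (m - 1) = t⁻¹ := by
    rw [← rpow_add (by linarith), show -m + (m - 1) = -1 by ring, rpow_neg_one]
  rw [G_neg_of_one_le ht, ← hpow]
  ring

theorem lintegral_Ioi_two_mul_G_neg_mul {m : ℝ} (hm : 0 < m) :
    ∫⁻ t in Ioi 0, ENNReal.ofReal (2 * G m (-t) * (m * t ^ (m - 1))) =
      ENNReal.ofReal (1 + 2 * m) := by
  have hnear : ∫⁻ t in Ioc 0 1, ENNReal.ofReal (2 * G m (-t) * (m * t ^ (m - 1))) = 1 := by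
    rw [setLIntegral_congr_fun measurableSet_Ioc (g := fun t => ENNReal.ofReal (m * t ^ (m - 1)))
        fun t ht => by rw [G_neg_of_le_one ht.1.le ht.2, mul_one_div_cancel two_ne_zero, one_mul],
      lintegral_Ioc_ofReal_of_hasDerivAt_of_nonneg zero_le_one
        (continuousOn_id.rpow_const fun _ _ => Or.inr hm.le)
        (fun t ht => hasDerivAt_rpow_const (Or.inl ht.1.ne'))
        (fun t ht => by have := ht.1; positivity)]
    simp [zero_rpow hm.ne']
  have hfar : ∫⁻ t in Ioi 1, ENNReal.ofReal (2 * G m (-t) * (m * t ^ (m - 1))) =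
      ENNReal.ofReal m * 2 := by
    rw [setLIntegral_congr_fun measurableSet_Ioi fun t ht => by
        rw [two_mul_G_neg_mul_of_one_le (mem_Ioi.mp ht).le, ENNReal.ofReal_mul hm.le],
      lintegral_const_mul' _ _ ENNReal.ofReal_ne_top,
      lintegral_Ioi_one_inv_mul_max_log_one_rpow_neg_two]
  rw [← Ioc_union_Ioi_eq_Ioi zero_le_one,
    lintegral_union measurableSet_Ioi (Ioc_disjoint_Ioi le_rfl), hnear, hfar,
    ENNReal.ofReal_add zero_le_one (by positivity), ENNReal.ofReal_one,
    ENNReal.ofReal_mul zero_le_two, mul_comm]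
  simp

theorem stmt1 (m : ℝ) (hm : 2 < m) (μ : Measure ℝ) [IsProbabilityMeasure μ]
    (hcdf : ∀ x : ℝ, (μ (Set.Iic x)).toReal = G m x) :
    ∫ x, |x| ^ m ∂μ = 1 + 2 * m := by
  have hm₀ : 0 < m := by linarith
  have hnn : 0 ≤ᵐ[μ] fun x => |x| ^ m := ae_of_all _ fun x => by positivity
  have htail : ∀ t ∈ Ioi (0 : ℝ),
      (μ (Iic (-t)) + μ (Ioi t)) * ENNReal.ofReal (m * t ^ (m - 1)) =
        ENNReal.ofReal (2 * G m (-t) * (m * t ^ (m - 1))) := fun t ht => by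
    rw [measure_Iic_neg_add_measure_Ioi hcdf,
      ← ENNReal.ofReal_mul' (mul_nonneg hm₀.le (rpow_nonneg (mem_Ioi.mp ht).le _))]
  rw [integral_eq_lintegral_of_nonneg_ae hnn
      (continuous_abs.rpow_const fun _ => Or.inr hm₀.le).aestronglyMeasurable,
    lintegral_ofReal_abs_rpow_eq_lintegral_tails_mul μ hm₀,
    setLIntegral_congr_fun measurableSet_Ioi htail, lintegral_Ioi_two_mul_G_neg_mul hm₀,
    ENNReal.toReal_ofReal (by positivity)]
end

section
/- For m > 2 and any δ > 0, the measure μ_{G_m} does not possess a finite (m+δ)-th absolute moment: ∫ |x|^{m+δ} dμ_{G_m}(x) = ∞. -/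
open Real Filter MeasureTheory

/-!
Only the right tail matters: for `t ≥ e` the cdf gives `μ (t, ∞) = t^{-m} (log t)^{-2} / 2`, so
Markov's inequality bounds the `(m+δ)`-th absolute moment below by `t^δ (log t)^{-2} / 2`, which
tends to infinity because powers beat logarithms.
-/

open Set Topology

lemma ofReal_rpow_mul_measure_Ioi_le_lintegral (μ : Measure ℝ) {p t : ℝ} (hp : 0 ≤ p)
    (ht : 0 ≤ t) :
    ENNReal.ofReal (t ^ p) * μ (Ioi t) ≤ ∫⁻ x, ENNReal.ofReal (|x| ^ p) ∂μ := by
  have hsub : Ioi t ⊆ {x | ENNReal.ofReal (t ^ p) ≤ ENNReal.ofReal (|x| ^ p)} := fun x hx =>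
    ENNReal.ofReal_le_ofReal (rpow_le_rpow ht ((le_of_lt hx).trans (le_abs_self x)) hp)
  calc ENNReal.ofReal (t ^ p) * μ (Ioi t)
      ≤ ENNReal.ofReal (t ^ p) * μ {x | ENNReal.ofReal (t ^ p) ≤ ENNReal.ofReal (|x| ^ p)} := by
        gcongr
    _ ≤ ∫⁻ x, ENNReal.ofReal (|x| ^ p) ∂μ := mul_meas_ge_le_lintegral (by fun_prop) _

lemma measure_Ioi_eq_ofReal_one_sub (μ : Measure ℝ) [IsProbabilityMeasure μ] (t : ℝ) :
    μ (Ioi t) = ENNReal.ofReal (1 - (μ (Iic t)).toReal) := by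
  rw [← compl_Iic, ← ENNReal.ofReal_toReal (measure_ne_top μ _)]
  exact congrArg ENNReal.ofReal (probReal_compl_eq_one_sub measurableSet_Iic)

lemma G_of_exp_one_le (m : ℝ) {t : ℝ} (ht : exp 1 ≤ t) :
    G m t = 1 - 1 / 2 * t ^ (-m) * log t ^ (-2 : ℝ) := by
  have ht1 : 1 < t := (one_lt_exp_iff.mpr one_pos).trans_le ht
  have hlog : 1 ≤ log t := by simpa using log_le_log (exp_pos 1) ht
  rw [G, if_neg (by linarith), if_neg (by linarith), max_eq_left hlog]

lemma tendsto_rpow_mul_log_rpow_neg_two_atTop {δ : ℝ} (hδ : 0 < δ) :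
    Tendsto (fun t => t ^ δ * log t ^ (-2 : ℝ)) atTop atTop := by
  refine ((tendsto_exp_mul_div_rpow_atTop 2 δ hδ).comp tendsto_log_atTop).congr' ?_
  filter_upwards [eventually_ge_atTop 1] with t ht
  rw [Function.comp_apply, rpow_def_of_pos (zero_lt_one.trans_le ht) δ, rpow_neg (log_nonneg ht),
    mul_comm δ, div_eq_mul_inv]

theorem stmt2 (m : ℝ) (hm : 2 < m) (δ : ℝ) (hδ : 0 < δ)
    (μ : Measure ℝ) [IsProbabilityMeasure μ]
    (hcdf : ∀ x : ℝ, (μ (Set.Iic x)).toReal = G m x) :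
    ∫⁻ x, ENNReal.ofReal (|x| ^ (m + δ)) ∂μ = ⊤ := by
  have hbound : ∀ᶠ t in atTop, ENNReal.ofReal (1 / 2 * (t ^ δ * log t ^ (-2 : ℝ))) ≤
      ∫⁻ x, ENNReal.ofReal (|x| ^ (m + δ)) ∂μ := by
    filter_upwards [eventually_ge_atTop (exp 1)] with t ht
    have ht0 : 0 < t := (exp_pos 1).trans_le ht
    calc ENNReal.ofReal (1 / 2 * (t ^ δ * log t ^ (-2 : ℝ)))
        = ENNReal.ofReal (t ^ (m + δ)) * μ (Ioi t) := by
          rw [measure_Ioi_eq_ofReal_one_sub, hcdf, G_of_exp_one_le m ht, sub_sub_cancel,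
            ← ENNReal.ofReal_mul (by positivity), rpow_add ht0, rpow_neg ht0.le]
          field_simp
      _ ≤ _ := ofReal_rpow_mul_measure_Ioi_le_lintegral μ (by linarith) ht0.le
  have htendsto : Tendsto (fun t => ENNReal.ofReal (1 / 2 * (t ^ δ * log t ^ (-2 : ℝ))))
      atTop (𝓝 ⊤) :=
    ENNReal.tendsto_ofReal_atTop.comp
      ((tendsto_rpow_mul_log_rpow_neg_two_atTop hδ).const_mul_atTop (by norm_num))
  exact top_le_iff.mp (le_of_tendsto htendsto hbound)
end
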